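/- arXiv:2507.02828 — 4 statements merged into one kernel-verified Lean document; each statement's English description precedes it below -/
import Mathlib

section
/- Let d ≥ 1, let ε ≥ 0, and let Φ, Ψ be linear maps on d×d complex matrices such that Φ is completely positive and trace-preserving (Tr Φ(X) = Tr X for all X), and both Ψ − (1−ε)Φ and (1+ε)Φ − Ψ are completely positive. Then ‖Ψ − Φ‖_⋄ ≤ 2ε. (This is the paper's argument that a unitary k-design with ε relative error is a unitary k-design with additive error at most 2ε; there Φ is the k-fold Haar twirling channel, which is completely positive and trace-preserving.) -/
open MeasureTheory Matrix
open scoped ComplexOrder Classical BigOperators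

noncomputable section

/-- Trace norm of a complex matrix: `‖M‖₁ = Tr √(Mᴴ M)`, the sum of singular values. -/
def traceNorm {n : Type*} [Fintype n] [DecidableEq n] (M : Matrix n n ℂ) : ℝ :=
  (((Matrix.posSemidef_conjTranspose_mul_self M).1.eigenvectorUnitary.1 *
    Matrix.diagonal (((↑) : ℝ → ℂ) ∘ (Real.sqrt ·) ∘ (Matrix.posSemidef_conjTranspose_mul_self M).1.eigenvalues) *
    (star (Matrix.posSemidef_conjTranspose_mul_self M).1.eigenvectorUnitary : Matrix n n ℂ)).trace).re

section PSDSqrt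
open scoped MatrixOrder
variable {n : Type*} [Fintype n] [DecidableEq n]

def Matrix.PosSemidef.sqrt {A : Matrix n n ℂ} (hA : A.PosSemidef) : Matrix n n ℂ :=
  hA.1.eigenvectorUnitary.1 * Matrix.diagonal (((↑) : ℝ → ℂ) ∘ (Real.sqrt ·) ∘ hA.1.eigenvalues) *
    (star hA.1.eigenvectorUnitary : Matrix n n ℂ)

lemma Matrix.PosSemidef.sqrt_eq_cfc {A : Matrix n n ℂ} (hA : A.PosSemidef) :
    hA.sqrt = CFC.sqrt A := by
  rw [CFC.sqrt_eq_cfc, cfc_nnreal_eq_real _ A hA.nonneg, hA.1.cfc_eq]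
  simp only [IsHermitian.cfc, Unitary.conjStarAlgAut_apply, Matrix.PosSemidef.sqrt]
  congr 3
  funext i
  simp [Real.coe_sqrt, Real.coe_toNNReal', max_eq_left (hA.eigenvalues_nonneg i)]

lemma Matrix.PosSemidef.posSemidef_sqrt {A : Matrix n n ℂ} (hA : A.PosSemidef) :
    hA.sqrt.PosSemidef := by
  rw [hA.sqrt_eq_cfc]
  exact Matrix.nonneg_iff_posSemidef.mp (CFC.sqrt_nonneg A)

lemma Matrix.PosSemidef.sqrt_mul_self {A : Matrix n n ℂ} (hA : A.PosSemidef) :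
    hA.sqrt * hA.sqrt = A := by
  rw [hA.sqrt_eq_cfc]
  exact CFC.sqrt_mul_sqrt_self A hA.nonneg

lemma Matrix.PosSemidef.eq_sqrt_of_sq_eq {B : Matrix n n ℂ} (hB : B.PosSemidef)
    {A : Matrix n n ℂ} (hA : A.PosSemidef) (h : B ^ 2 = A) : B = hA.sqrt := by
  rw [hA.sqrt_eq_cfc, eq_comm, CFC.sqrt_eq_iff A B hA.nonneg hB.nonneg, ← sq, h]

end PSDSqrt


section Aux
variable {n : Type*} [Fintype n] [DecidableEq n]

/-- both-sided contraction -/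
def IsContraction (C : Matrix n n ℂ) : Prop :=
  (1 - Cᴴ * C).PosSemidef ∧ (1 - C * Cᴴ).PosSemidef

lemma IsContraction.conjT {C : Matrix n n ℂ} (h : IsContraction C) : IsContraction Cᴴ := by
  refine ⟨by simpa using h.2, by simpa using h.1⟩

lemma psd_diag_nonneg {M : Matrix n n ℂ} (h : M.PosSemidef) (i : n) : 0 ≤ M i i := by
  have := h.dotProduct_mulVec_nonneg (Pi.single i 1)
  simpa [dotProduct, Pi.single_apply, mulVec] using this

lemma psd_trace_re_nonneg {M : Matrix n n ℂ} (h : M.PosSemidef) : 0 ≤ M.trace.re := by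
  rw [Matrix.trace]
  rw [Complex.re_sum]
  exact Finset.sum_nonneg fun i _ => (Complex.le_def.mp (psd_diag_nonneg h i)).1

lemma IsContraction.unit_smul {C : Matrix n n ℂ} (h : IsContraction C) {c : ℂ} (hc : ‖c‖ = 1) :
    IsContraction (c • C) := by
  have h1 : star c * c = 1 := by
    rw [Complex.star_def, mul_comm, Complex.mul_conj, Complex.normSq_eq_norm_sq]
    simp [hc]
  constructor
  · have : (c • C)ᴴ * (c • C) = Cᴴ * C := by
      rw [conjTranspose_smul, smul_mul_smul_comm, h1, one_smul]
    rw [this]; exact h.1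
  · have : (c • C) * (c • C)ᴴ = C * Cᴴ := by
      rw [conjTranspose_smul, smul_mul_smul_comm, mul_comm c _, h1, one_smul]
    rw [this]; exact h.2

lemma IsContraction.neg {C : Matrix n n ℂ} (h : IsContraction C) : IsContraction (-C) := by
  simpa using h.unit_smul (c := -1) (by simp)

lemma IsContraction.mul {C W : Matrix n n ℂ} (hC : IsContraction C) (hW : IsContraction W) :
    IsContraction (C * W) := by
  constructor
  · have key : 1 - (C * W)ᴴ * (C * W) = Wᴴ * (1 - Cᴴ * C) * W + (1 - Wᴴ * W) := by
      simp only [conjTranspose_mul]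
      noncomm_ring
    rw [key]
    exact ((hC.1.conjTranspose_mul_mul_same W).add hW.1)
  · have key : 1 - (C * W) * (C * W)ᴴ = C * (1 - W * Wᴴ) * Cᴴ + (1 - C * Cᴴ) := by
      simp only [conjTranspose_mul]
      noncomm_ring
    rw [key]
    exact ((hW.2.mul_mul_conjTranspose_same C).add hC.2)

end Aux

section CS
variable {n : Type*} [Fintype n] [DecidableEq n]

lemma re_dot_le {C : Matrix n n ℂ} (hC : (1 - Cᴴ * C).PosSemidef) (c : n → ℂ) :
    (dotProduct (star c) (C *ᵥ c)).re ≤ (dotProduct (star c) c).re := by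
  set v := C *ᵥ c with hv
  have hvv : dotProduct (star v) v = dotProduct (star c) ((Cᴴ * C) *ᵥ c) := by
    rw [← mulVec_mulVec, dotProduct_mulVec (star c) Cᴴ, ← star_mulVec]
  have h1 : (dotProduct (star v) v).re ≤ (dotProduct (star c) c).re := by
    have h0 := hC.dotProduct_mulVec_nonneg c
    have : dotProduct (star c) ((1 - Cᴴ * C) *ᵥ c)
        = dotProduct (star c) c - dotProduct (star v) v := by
      rw [hvv, sub_mulVec, dotProduct_sub, one_mulVec]
    rw [this] at h0
    have := (Complex.le_def.mp h0).1
    simp only [Complex.zero_re, Complex.sub_re] at this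
    linarith
  have h2 : 0 ≤ (dotProduct (star (c - v)) (c - v)).re :=
    (Complex.le_def.mp (dotProduct_star_self_nonneg (c - v))).1
  have hexp : dotProduct (star (c - v)) (c - v)
      = dotProduct (star c) c - dotProduct (star c) v
        - dotProduct (star v) c + dotProduct (star v) v := by
    simp only [star_sub, sub_dotProduct, dotProduct_sub]
    ring
  have hsym : (dotProduct (star v) c).re = (dotProduct (star c) v).re := by
    have : dotProduct (star v) c = star (dotProduct (star c) v) := by
      rw [← star_dotProduct_star, star_star]
    rw [this, Complex.star_def, Complex.conj_re]
  rw [hexp] at h2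
  simp only [Complex.add_re, Complex.sub_re] at h2
  rw [hsym] at h2
  linarith

/-- Cauchy–Schwarz / Hölder for PSD: `Re tr(C X) ≤ Re tr X` for a contraction `C`. -/
lemma re_trace_mul_psd_le {C X : Matrix n n ℂ} (hC : IsContraction C) (hX : X.PosSemidef) :
    ((C * X).trace).re ≤ X.trace.re := by
  set S := hX.sqrt with hSdef
  have hS : S.PosSemidef := hX.posSemidef_sqrt
  have hSS : S * S = X := hX.sqrt_mul_self
  have hherm : ∀ i j, S i j = star (S j i) := by
    intro i j
    rw [← Matrix.conjTranspose_apply, hS.1]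
  have htr : (C * X).trace = (S * (C * S)).trace := by
    rw [← hSS, ← mul_assoc, Matrix.trace_mul_comm]
  have hentry : ∀ i, (S * (C * S)) i i = dotProduct (star (fun j => S j i)) (C *ᵥ (fun j => S j i)) := by
    intro i
    simp only [Matrix.mul_apply, dotProduct, mulVec, Pi.star_apply]
    refine Finset.sum_congr rfl fun j _ => ?_
    rw [← hherm i j]
  have hXii : ∀ i, dotProduct (star (fun j => S j i)) (fun j => S j i) = X i i := by
    intro i
    rw [← hSS]
    simp only [dotProduct, Matrix.mul_apply, Pi.star_apply]
    refine Finset.sum_congr rfl fun j _ => ?_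
    rw [hherm i j]
  rw [htr, Matrix.trace, Matrix.trace, Complex.re_sum, Complex.re_sum]
  refine Finset.sum_le_sum fun i _ => ?_
  show ((S * (C * S)) i i).re ≤ (X i i).re
  rw [hentry i, ← hXii i]
  exact re_dot_le hC.1 _

/-- Polar decomposition: a contraction `W` with `M = W √(MᴴM)` and `Wᴴ M = √(MᴴM)`. -/
lemma polar (M : Matrix n n ℂ) :
    ∃ W : Matrix n n ℂ, IsContraction W ∧
      M = W * (Matrix.posSemidef_conjTranspose_mul_self M).sqrt ∧
      Wᴴ * M = (Matrix.posSemidef_conjTranspose_mul_self M).sqrt := by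
  set hMM := Matrix.posSemidef_conjTranspose_mul_self M with hMMdef
  set R := hMM.sqrt with hRdef
  have hR : R.PosSemidef := hMM.posSemidef_sqrt
  have hRR : R * R = Mᴴ * M := hMM.sqrt_mul_self
  have hH : R.IsHermitian := hR.1
  set V : Matrix n n ℂ := (hH.eigenvectorUnitary : Matrix n n ℂ) with hVdef
  set g : n → ℝ := hH.eigenvalues with hgdef
  have hg0 : ∀ i, 0 ≤ g i := fun i => hR.eigenvalues_nonneg i
  set D : Matrix n n ℂ := Matrix.diagonal (fun i => (g i : ℂ)) with hDdef
  set Di : Matrix n n ℂ := Matrix.diagonal (fun i => if g i = 0 then 0 else ((g i : ℂ))⁻¹) with hDidef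
  set E : Matrix n n ℂ := Matrix.diagonal (fun i => if g i = 0 then (0:ℂ) else 1) with hEdef
  have hVV : Vᴴ * V = 1 := by
    rw [← Matrix.star_eq_conjTranspose]
    exact Unitary.coe_star_mul_self hH.eigenvectorUnitary
  have hVV' : V * Vᴴ = 1 := by
    rw [← Matrix.star_eq_conjTranspose]
    exact Unitary.coe_mul_star_self hH.eigenvectorUnitary
  have hspec : R = V * D * Vᴴ := by
    rw [← Matrix.star_eq_conjTranspose]
    exact hH.spectral_theorem
  have hDiD : Di * D = E := by
    rw [hDidef, hDdef, hEdef, Matrix.diagonal_mul_diagonal]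
    refine congrArg Matrix.diagonal (funext fun i => ?_)
    by_cases h : g i = 0 <;> simp [h, inv_mul_cancel₀, Complex.ofReal_ne_zero]
  have hED : E * D = D := by
    rw [hEdef, hDdef, Matrix.diagonal_mul_diagonal]
    refine congrArg Matrix.diagonal (funext fun i => ?_)
    by_cases h : g i = 0 <;> simp [h]
  have hDiH : Diᴴ = Di := by
    rw [hDidef, Matrix.diagonal_conjTranspose]
    refine congrArg Matrix.diagonal (funext fun i => ?_)
    by_cases h : g i = 0 <;> simp [h, ← Complex.ofReal_inv]
  set W : Matrix n n ℂ := M * V * Di * Vᴴ with hWdef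
  -- key1 : Vᴴ * (Mᴴ * M) * V = D * D
  have key1 : Vᴴ * (Mᴴ * M) * V = D * D := by
    rw [← hRR, hspec]
    calc Vᴴ * (V * D * Vᴴ * (V * D * Vᴴ)) * V
        = (Vᴴ * V) * D * (Vᴴ * V) * D * (Vᴴ * V) := by noncomm_ring
      _ = D * D := by rw [hVV]; noncomm_ring
  -- key2 : columns of M*V with zero eigenvalue vanish
  have key2 : ∀ j, g j = 0 → ∀ i, (M * V) i j = 0 := by
    intro j hj i
    have hdiag : ((M * V)ᴴ * (M * V)) j j = 0 := by
      have : (M * V)ᴴ * (M * V) = Vᴴ * (Mᴴ * M) * V := by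
        rw [Matrix.conjTranspose_mul]; noncomm_ring
      rw [this, key1, Matrix.diagonal_mul_diagonal]
      simp [hj]
    have hsum : ∑ k, Complex.normSq ((M * V) k j) = 0 := by
      have : ((M * V)ᴴ * (M * V)) j j = ∑ k, ((starRingEnd ℂ) ((M * V) k j)) * (M * V) k j := by
        simp only [Matrix.mul_apply, Matrix.conjTranspose_apply, Complex.star_def]
      rw [this] at hdiag
      have : (↑(∑ k, Complex.normSq ((M * V) k j)) : ℂ) = 0 := by
        rw [← hdiag]
        push_cast
        refine Finset.sum_congr rfl fun k _ => ?_
        rw [Complex.normSq_eq_conj_mul_self]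
      exact_mod_cast this
    have := (Finset.sum_eq_zero_iff_of_nonneg (fun k _ => Complex.normSq_nonneg _)).mp hsum i (Finset.mem_univ i)
    exact Complex.normSq_eq_zero.mp this
  have key3 : M * V * E = M * V := by
    ext i j
    rw [hEdef, Matrix.mul_diagonal]
    by_cases h : g j = 0
    · simp [h, key2 j h i]
    · simp [h]
  -- M = W * R
  have hWR : W * R = M := by
    have e1 : W * R = M * V * Di * (Vᴴ * V) * D * Vᴴ := by rw [hWdef, hspec]; noncomm_ring
    rw [e1, hVV, mul_one, mul_assoc (M * V) Di D, hDiD, key3, mul_assoc, hVV', mul_one]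

  have hWW : Wᴴ * W = V * E * Vᴴ := by
    have e2 : Wᴴ * W = V * (Di * (Vᴴ * (Mᴴ * M) * V) * Di) * Vᴴ := by
      rw [hWdef]
      simp only [Matrix.conjTranspose_mul, Matrix.conjTranspose_conjTranspose, hDiH]
      noncomm_ring
    have e3 : Di * (D * D) * Di = E := by
      rw [hDidef, hDdef, hEdef]
      simp only [Matrix.diagonal_mul_diagonal]
      refine congrArg Matrix.diagonal (funext fun i => ?_)
      by_cases h : g i = 0
      · simp [h]
      · have : (g i : ℂ) ≠ 0 := by exact_mod_cast Complex.ofReal_ne_zero.mpr h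
        simp only [h, ↓reduceIte]
        field_simp
    rw [e2, key1, e3]
  have hC1 : (1 - Wᴴ * W).PosSemidef := by
    have e5 : 1 - Wᴴ * W = V * (1 - E) * Vᴴ := by
      rw [hWW, mul_sub, sub_mul, mul_one, hVV']
    have hE1 : (1 - E).PosSemidef := by
      have : (1:Matrix n n ℂ) - E = Matrix.diagonal (fun i => 1 - (if g i = 0 then (0:ℂ) else 1)) := by
        rw [hEdef, ← Matrix.diagonal_one, Matrix.diagonal_sub]
      rw [this]
      refine Matrix.PosSemidef.diagonal fun i => ?_
      by_cases h : g i = 0 <;> simp [h]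
    simpa [e5] using hE1.mul_mul_conjTranspose_same V
  have e4 : W * Wᴴ = M * V * (Di * Di) * Vᴴ * Mᴴ := by
    have : Wᴴ = V * Di * Vᴴ * Mᴴ := by
      rw [hWdef]
      simp only [Matrix.conjTranspose_mul, Matrix.conjTranspose_conjTranspose, hDiH]
      noncomm_ring
    rw [this, hWdef]
    rw [show M * V * Di * Vᴴ * (V * Di * Vᴴ * Mᴴ)
        = M * V * (Di * (Vᴴ * V) * Di) * Vᴴ * Mᴴ from by noncomm_ring, hVV, mul_one]
  have hidem : (W * Wᴴ) * (W * Wᴴ) = W * Wᴴ := by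
    have e6 : Di * Di * (D * D) * (Di * Di) = Di * Di := by
      rw [hDidef, hDdef]
      simp only [Matrix.diagonal_mul_diagonal]
      refine congrArg Matrix.diagonal (funext fun i => ?_)
      by_cases h : g i = 0
      · simp [h]
      · have : (g i : ℂ) ≠ 0 := Complex.ofReal_ne_zero.mpr h
        simp only [h, ↓reduceIte]
        field_simp
    rw [e4]
    rw [show M * V * (Di * Di) * Vᴴ * Mᴴ * (M * V * (Di * Di) * Vᴴ * Mᴴ)
        = M * V * ((Di * Di) * (Vᴴ * (Mᴴ * M) * V) * (Di * Di)) * Vᴴ * Mᴴ from by noncomm_ring,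
      key1, show Di * Di * (D * D) * (Di * Di) = Di * Di from e6]
  have hC2 : (1 - W * Wᴴ).PosSemidef := by
    have hh : (1 - W * Wᴴ)ᴴ = 1 - W * Wᴴ := by
      simp only [Matrix.conjTranspose_sub, Matrix.conjTranspose_one, Matrix.conjTranspose_mul,
        Matrix.conjTranspose_conjTranspose]
    have : 1 - W * Wᴴ = (1 - W * Wᴴ)ᴴ * (1 - W * Wᴴ) := by
      rw [hh]
      rw [show (1 - W * Wᴴ) * (1 - W * Wᴴ)
          = 1 - W * Wᴴ - W * Wᴴ + (W * Wᴴ) * (W * Wᴴ) from by noncomm_ring, hidem]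
      noncomm_ring
    rw [this]
    exact Matrix.posSemidef_conjTranspose_mul_self _
  refine ⟨W, ⟨hC1, hC2⟩, hWR.symm, ?_⟩
  have : Wᴴ * M = V * (E * D) * Vᴴ := by
    rw [← hWR, ← mul_assoc, hWW, hspec]
    rw [show V * E * Vᴴ * (V * D * Vᴴ) = V * (E * (Vᴴ * V) * D) * Vᴴ from by noncomm_ring,
      hVV, mul_one]
  rw [this, hED, ← hspec]

lemma traceNorm_eq_sqrt_trace_re (M : Matrix n n ℂ) :
    traceNorm M = ((Matrix.posSemidef_conjTranspose_mul_self M).sqrt.trace).re := rfl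

/-- Hölder-type inequality. -/
lemma re_trace_mul_le_traceNorm {C : Matrix n n ℂ} (hC : IsContraction C) (M : Matrix n n ℂ) :
    ((C * M).trace).re ≤ traceNorm M := by
  obtain ⟨W, hW, hM, -⟩ := polar M
  set R := (Matrix.posSemidef_conjTranspose_mul_self M).sqrt with hRdef
  have hR : R.PosSemidef := (Matrix.posSemidef_conjTranspose_mul_self M).posSemidef_sqrt
  have : C * M = (C * W) * R := by rw [hM, mul_assoc]
  rw [this, traceNorm_eq_sqrt_trace_re]
  exact re_trace_mul_psd_le (hC.mul hW) hR

lemma exists_contraction_traceNorm (M : Matrix n n ℂ) :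
    ∃ C : Matrix n n ℂ, IsContraction C ∧ ((C * M).trace).re = traceNorm M := by
  obtain ⟨W, hW, -, hWM⟩ := polar M
  exact ⟨Wᴴ, hW.conjT, by rw [hWM]; rfl⟩

lemma traceNorm_nonneg (M : Matrix n n ℂ) : 0 ≤ traceNorm M :=
  psd_trace_re_nonneg (Matrix.posSemidef_conjTranspose_mul_self M).posSemidef_sqrt

/-- Decomposition of a Hermitian matrix into PSD parts with trace sum equal to trace norm. -/
lemma exists_psd_decomp {H : Matrix n n ℂ} (hH : H.IsHermitian) :
    ∃ P Q : Matrix n n ℂ, P.PosSemidef ∧ Q.PosSemidef ∧ H = P - Q ∧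
      P.trace.re + Q.trace.re = traceNorm H := by
  set V : Matrix n n ℂ := (hH.eigenvectorUnitary : Matrix n n ℂ) with hVdef
  set g : n → ℝ := hH.eigenvalues with hgdef
  have hVV : Vᴴ * V = 1 := by
    rw [← Matrix.star_eq_conjTranspose]
    exact Unitary.coe_star_mul_self hH.eigenvectorUnitary
  have hspec : H = V * Matrix.diagonal (fun i => (g i : ℂ)) * Vᴴ := by
    rw [← Matrix.star_eq_conjTranspose]
    exact hH.spectral_theorem
  set P : Matrix n n ℂ := V * Matrix.diagonal (fun i => ((max (g i) 0 : ℝ) : ℂ)) * Vᴴ with hPdef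
  set Q : Matrix n n ℂ := V * Matrix.diagonal (fun i => ((max (-g i) 0 : ℝ) : ℂ)) * Vᴴ with hQdef
  have hP : P.PosSemidef :=
    (Matrix.PosSemidef.diagonal fun i => Complex.zero_le_real.mpr (le_max_right _ _)).mul_mul_conjTranspose_same V
  have hQ : Q.PosSemidef :=
    (Matrix.PosSemidef.diagonal fun i => Complex.zero_le_real.mpr (le_max_right _ _)).mul_mul_conjTranspose_same V
  have hPQ : H = P - Q := by
    rw [hPdef, hQdef, hspec, ← sub_mul, ← mul_sub, Matrix.diagonal_sub]
    congr 2
    refine congrArg Matrix.diagonal (funext fun i => ?_)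
    rw [← Complex.ofReal_sub, max_zero_sub_max_neg_zero_eq_self]
  set S : Matrix n n ℂ := V * Matrix.diagonal (fun i => ((|g i| : ℝ) : ℂ)) * Vᴴ with hSdef
  have hS : S.PosSemidef :=
    (Matrix.PosSemidef.diagonal fun i => Complex.zero_le_real.mpr (abs_nonneg _)).mul_mul_conjTranspose_same V
  have hSsq : S ^ 2 = Hᴴ * H := by
    rw [pow_two, hH.eq, hSdef, hspec]
    rw [show V * Matrix.diagonal (fun i => ((|g i| : ℝ) : ℂ)) * Vᴴ * (V * Matrix.diagonal (fun i => ((|g i| : ℝ) : ℂ)) * Vᴴ)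
      = V * (Matrix.diagonal (fun i => ((|g i| : ℝ) : ℂ)) * (Vᴴ * V) * Matrix.diagonal (fun i => ((|g i| : ℝ) : ℂ))) * Vᴴ
      from by noncomm_ring, hVV, mul_one,
      show V * Matrix.diagonal (fun i => ((g i : ℝ) : ℂ)) * Vᴴ * (V * Matrix.diagonal (fun i => ((g i : ℝ) : ℂ)) * Vᴴ)
      = V * (Matrix.diagonal (fun i => ((g i : ℝ) : ℂ)) * (Vᴴ * V) * Matrix.diagonal (fun i => ((g i : ℝ) : ℂ))) * Vᴴ
      from by noncomm_ring, hVV, mul_one, Matrix.diagonal_mul_diagonal, Matrix.diagonal_mul_diagonal]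
    congr 2
    refine congrArg Matrix.diagonal (funext fun i => ?_)
    rw [← Complex.ofReal_mul, ← Complex.ofReal_mul, abs_mul_abs_self]
  have hSeq : S = (Matrix.posSemidef_conjTranspose_mul_self H).sqrt :=
    hS.eq_sqrt_of_sq_eq (Matrix.posSemidef_conjTranspose_mul_self H) hSsq
  have hPQS : P + Q = S := by
    rw [hPdef, hQdef, hSdef, ← add_mul, ← mul_add, Matrix.diagonal_add]
    congr 2
    refine congrArg Matrix.diagonal (funext fun i => ?_)
    rw [← Complex.ofReal_add, max_zero_add_max_neg_zero_eq_abs_self]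
  refine ⟨P, Q, hP, hQ, hPQ, ?_⟩
  rw [traceNorm_eq_sqrt_trace_re, ← hSeq, ← hPQS, Matrix.trace_add, Complex.add_re]

end CS

/-- The induced map `Φ ⊗ id` on matrices over the doubled index type; for linear `Φ`
it is the unique linear map with `(Φ ⊗ id)(A ⊗ B) = Φ(A) ⊗ B`. -/
def tensorId {n : Type*} (Φ : Matrix n n ℂ → Matrix n n ℂ)
    (O : Matrix (n × n) (n × n) ℂ) : Matrix (n × n) (n × n) ℂ :=
  Matrix.of fun p q => Φ (Matrix.of fun a c => O (a, p.2) (c, q.2)) p.1 q.1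


section Tensor
variable {n : Type*} [Fintype n] [DecidableEq n]

lemma tensorId_linear_sub (f g : Matrix n n ℂ →ₗ[ℂ] Matrix n n ℂ) (O : Matrix (n × n) (n × n) ℂ) :
    tensorId ⇑(f - g) O = tensorId ⇑f O - tensorId ⇑g O := by
  ext p q
  simp [tensorId, Matrix.sub_apply]

lemma tensorId_linear_add (f g : Matrix n n ℂ →ₗ[ℂ] Matrix n n ℂ) (O : Matrix (n × n) (n × n) ℂ) :
    tensorId ⇑(f + g) O = tensorId ⇑f O + tensorId ⇑g O := by
  ext p q
  simp [tensorId, Matrix.add_apply]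

lemma tensorId_linear_smul (c : ℂ) (f : Matrix n n ℂ →ₗ[ℂ] Matrix n n ℂ)
    (O : Matrix (n × n) (n × n) ℂ) :
    tensorId ⇑(c • f) O = c • tensorId ⇑f O := by
  ext p q
  simp [tensorId, Matrix.smul_apply]

lemma tensorId_map_add (f : Matrix n n ℂ →ₗ[ℂ] Matrix n n ℂ) (X Y : Matrix (n × n) (n × n) ℂ) :
    tensorId ⇑f (X + Y) = tensorId ⇑f X + tensorId ⇑f Y := by
  ext p q
  show f (Matrix.of fun a c => (X + Y) (a, p.2) (c, q.2)) p.1 q.1 = _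
  rw [show (Matrix.of fun a c => (X + Y) (a, p.2) (c, q.2))
      = (Matrix.of fun a c => X (a, p.2) (c, q.2)) + (Matrix.of fun a c => Y (a, p.2) (c, q.2))
      from rfl, map_add]
  rfl

lemma tensorId_map_sub (f : Matrix n n ℂ →ₗ[ℂ] Matrix n n ℂ) (X Y : Matrix (n × n) (n × n) ℂ) :
    tensorId ⇑f (X - Y) = tensorId ⇑f X - tensorId ⇑f Y := by
  ext p q
  show f (Matrix.of fun a c => (X - Y) (a, p.2) (c, q.2)) p.1 q.1 = _
  rw [show (Matrix.of fun a c => (X - Y) (a, p.2) (c, q.2))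
      = (Matrix.of fun a c => X (a, p.2) (c, q.2)) - (Matrix.of fun a c => Y (a, p.2) (c, q.2))
      from rfl, map_sub]
  rfl

lemma tensorId_map_smul (f : Matrix n n ℂ →ₗ[ℂ] Matrix n n ℂ) (c : ℂ)
    (X : Matrix (n × n) (n × n) ℂ) :
    tensorId ⇑f (c • X) = c • tensorId ⇑f X := by
  ext p q
  show f (Matrix.of fun a b => (c • X) (a, p.2) (b, q.2)) p.1 q.1 = _
  rw [show (Matrix.of fun a b => (c • X) (a, p.2) (b, q.2))
      = c • (Matrix.of fun a b => X (a, p.2) (b, q.2)) from rfl, _root_.map_smul]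
  rfl

lemma trace_tensorId (f : Matrix n n ℂ →ₗ[ℂ] Matrix n n ℂ) (c : ℂ)
    (hf : ∀ X, (f X).trace = c * X.trace) (O : Matrix (n × n) (n × n) ℂ) :
    (tensorId ⇑f O).trace = c * O.trace := by
  have h1 : (tensorId ⇑f O).trace = ∑ j : n, ∑ i : n, tensorId ⇑f O (i, j) (i, j) := by
    rw [Matrix.trace, Fintype.sum_prod_type]
    exact Finset.sum_comm
  have h2 : ∀ j, ∑ i : n, tensorId ⇑f O (i, j) (i, j)
      = (f (Matrix.of fun a b => O (a, j) (b, j))).trace := fun j => rfl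
  have h3 : O.trace = ∑ j : n, ∑ i : n, O (i, j) (i, j) := by
    rw [Matrix.trace, Fintype.sum_prod_type]
    exact Finset.sum_comm
  rw [h1, h3, Finset.mul_sum]
  refine Finset.sum_congr rfl fun j _ => ?_
  rw [h2 j, hf]
  rfl

end Tensor

/-- Complete positivity: `Φ ⊗ id` maps positive semidefinite matrices to positive
semidefinite matrices. -/
def CompletelyPositive {n : Type*} [Fintype n] (Φ : Matrix n n ℂ → Matrix n n ℂ) : Prop :=
  ∀ O : Matrix (n × n) (n × n) ℂ, O.PosSemidef → (tensorId Φ O).PosSemidef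

/-- Diamond norm `‖Φ‖_⋄ = sup {‖(Φ ⊗ id)(O)‖₁ : ‖O‖₁ ≤ 1}`. -/
def diamondNorm {n : Type*} [Fintype n] [DecidableEq n]
    (Φ : Matrix n n ℂ → Matrix n n ℂ) : ℝ :=
  sSup {x : ℝ | ∃ O : Matrix (n × n) (n × n) ℂ,
    traceNorm O ≤ 1 ∧ x = traceNorm (tensorId Φ O)}


section Helpers
variable {n : Type*} [Fintype n] [DecidableEq n]

lemma re_trace_mul_conjT (C O : Matrix n n ℂ) :
    ((C * Oᴴ).trace).re = ((Cᴴ * O).trace).re := by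
  have : (C * Oᴴ).trace = star ((Cᴴ * O).trace) := by
    rw [← Matrix.trace_conjTranspose, Matrix.conjTranspose_mul,
      Matrix.conjTranspose_conjTranspose, Matrix.trace_mul_comm]
  rw [this]
  exact Complex.conj_re _

lemma neg_re_trace (C X : Matrix n n ℂ) : (((-C) * X).trace).re = -(((C * X).trace).re) := by
  rw [neg_mul, Matrix.trace_neg, Complex.neg_re]

lemma smulI_trace (C X : Matrix n n ℂ) :
    ((Complex.I • C * X).trace) = Complex.I * ((C * X).trace) := by
  rw [Matrix.smul_mul, Matrix.trace_smul, smul_eq_mul]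

end Helpers

/-- A unitary `k`-design with `ε` relative error is a unitary `k`-design with additive
error at most `2ε`: if `Φ` is completely positive and trace-preserving and both
`Ψ - (1-ε)Φ` and `(1+ε)Φ - Ψ` are completely positive, then `‖Ψ - Φ‖_⋄ ≤ 2ε`. -/
theorem diamondNorm_le_of_relative_error
    (d : ℕ) (hd : 1 ≤ d) (ε : ℝ) (hε : 0 ≤ ε)
    (Φ Ψ : Matrix (Fin d) (Fin d) ℂ →ₗ[ℂ] Matrix (Fin d) (Fin d) ℂ)
    (hCP : CompletelyPositive (⇑Φ))
    (hTP : ∀ X : Matrix (Fin d) (Fin d) ℂ, (Φ X).trace = X.trace)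
    (h₁ : CompletelyPositive (⇑(Ψ - ((1 - ε : ℝ) : ℂ) • Φ)))
    (h₂ : CompletelyPositive (⇑(((1 + ε : ℝ) : ℂ) • Φ - Ψ))) :
    diamondNorm (⇑(Ψ - Φ)) ≤ 2 * ε := by
  refine Real.sSup_le ?_ (by linarith)
  rintro x ⟨O, hO, rfl⟩
  set Λa := Ψ - ((1 - ε : ℝ) : ℂ) • Φ with hΛa
  set Λb := ((1 + ε : ℝ) : ℂ) • Φ - Ψ with hΛb
  -- Hermitian parts
  set H := (2⁻¹ : ℂ) • (O + Oᴴ) with hHdef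
  set K := (2⁻¹ : ℂ) • (Complex.I • (Oᴴ - O)) with hKdef
  have hstar2 : star (2⁻¹ : ℂ) = 2⁻¹ := by
    rw [Complex.star_def, ← Complex.ofReal_ofNat 2, ← Complex.ofReal_inv, Complex.conj_ofReal]
  have hHh : H.IsHermitian := by
    show Hᴴ = H
    rw [hHdef, Matrix.conjTranspose_smul, Matrix.conjTranspose_add,
      Matrix.conjTranspose_conjTranspose, add_comm Oᴴ O, hstar2]
  have hKh : K.IsHermitian := by
    show Kᴴ = K
    rw [hKdef, Matrix.conjTranspose_smul, Matrix.conjTranspose_smul, Matrix.conjTranspose_sub,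
      Matrix.conjTranspose_conjTranspose, hstar2, Complex.star_def, Complex.conj_I,
      neg_smul, ← smul_neg, neg_sub]
  have hOHK : O = H + Complex.I • K := by
    rw [hHdef, hKdef, smul_smul, smul_smul]
    rw [show Complex.I * 2⁻¹ * Complex.I = -2⁻¹ by
      rw [mul_comm Complex.I (2⁻¹:ℂ), mul_assoc, Complex.I_mul_I]; ring]
    rw [neg_smul, ← smul_neg, neg_sub, ← smul_add,
      show (O + Oᴴ) + (O - Oᴴ) = (2:ℂ) • O from by rw [two_smul]; abel,
      smul_smul, show ((2:ℂ)⁻¹ * 2 : ℂ) = 1 from by norm_num, one_smul]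
  -- decompositions
  obtain ⟨P₁, Q₁, hP₁, hQ₁, hHPQ, hs₁⟩ := exists_psd_decomp hHh
  obtain ⟨P₂, Q₂, hP₂, hQ₂, hKPQ, hs₂⟩ := exists_psd_decomp hKh
  -- trace norms of Hermitian parts
  have h2inv : (2⁻¹ : ℂ) = ((2⁻¹ : ℝ) : ℂ) := by norm_num
  have hnormH : traceNorm H ≤ 1 := by
    obtain ⟨C, hC, hCval⟩ := exists_contraction_traceNorm H
    rw [← hCval]
    have expand : (C * H).trace = ((2⁻¹:ℝ):ℂ) * ((C * O).trace + (C * Oᴴ).trace) := by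
      rw [hHdef, Matrix.mul_smul, Matrix.trace_smul, Matrix.mul_add, Matrix.trace_add,
        smul_eq_mul, h2inv]
    have b1 := re_trace_mul_le_traceNorm hC O
    have b2 : ((C * Oᴴ).trace).re ≤ traceNorm O := by
      rw [re_trace_mul_conjT]
      exact re_trace_mul_le_traceNorm hC.conjT O
    rw [expand, Complex.re_ofReal_mul, Complex.add_re]
    linarith
  have hnormK : traceNorm K ≤ 1 := by
    obtain ⟨C, hC, hCval⟩ := exists_contraction_traceNorm K
    rw [← hCval]
    have expand : (C * K).trace
        = ((2⁻¹:ℝ):ℂ) * (((Complex.I • C) * Oᴴ).trace + (((-Complex.I) • C) * O).trace) := by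
      rw [hKdef, Matrix.mul_smul, Matrix.mul_smul, Matrix.trace_smul, Matrix.trace_smul,
        Matrix.mul_sub, Matrix.trace_sub, Matrix.smul_mul, Matrix.smul_mul,
        Matrix.trace_smul, Matrix.trace_smul, ← h2inv]
      simp only [smul_eq_mul]
      ring
    have hnI : ‖-Complex.I‖ = 1 := by simp
    have hI : ‖Complex.I‖ = 1 := by simp
    have b1 : (((Complex.I • C) * Oᴴ).trace).re ≤ traceNorm O := by
      rw [re_trace_mul_conjT]
      exact re_trace_mul_le_traceNorm (hC.unit_smul hI).conjT O
    have b2 := re_trace_mul_le_traceNorm (hC.unit_smul hnI) O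
    rw [expand, Complex.re_ofReal_mul, Complex.add_re]
    linarith
  -- linear map identities
  have hdiff : Ψ - Φ = (2⁻¹:ℂ) • (Λa - Λb) := by
    rw [hΛa, hΛb]
    push_cast
    module
  have hsumΛ : Λa + Λb = ((2*ε:ℝ):ℂ) • Φ := by
    rw [hΛa, hΛb]
    push_cast
    module
  have hpair : ∀ X : Matrix (Fin d × Fin d) (Fin d × Fin d) ℂ,
      (tensorId ⇑Λa X).trace.re + (tensorId ⇑Λb X).trace.re = 2 * ε * X.trace.re := by
    intro X
    have e : (tensorId ⇑Λa X).trace + (tensorId ⇑Λb X).trace = ((2*ε:ℝ):ℂ) * X.trace := by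
      rw [← Matrix.trace_add, ← tensorId_linear_add, hsumΛ,
        trace_tensorId _ ((2*ε:ℝ):ℂ)
          (fun Y => by rw [LinearMap.smul_apply, Matrix.trace_smul, hTP, smul_eq_mul])]
    have h' := congrArg Complex.re e
    rw [Complex.add_re, Complex.re_ofReal_mul] at h'
    exact h'
  have hexp : tensorId ⇑(Ψ - Φ) O
      = (2⁻¹:ℂ) • ((tensorId ⇑Λa P₁ - tensorId ⇑Λa Q₁
          + Complex.I • (tensorId ⇑Λa P₂ - tensorId ⇑Λa Q₂))
        - (tensorId ⇑Λb P₁ - tensorId ⇑Λb Q₁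
          + Complex.I • (tensorId ⇑Λb P₂ - tensorId ⇑Λb Q₂))) := by
    have hO' : O = (P₁ - Q₁) + Complex.I • (P₂ - Q₂) := by rw [hOHK, hHPQ, hKPQ]
    rw [hdiff, tensorId_linear_smul, tensorId_linear_sub, hO']
    simp only [tensorId_map_add, tensorId_map_sub, tensorId_map_smul]
  obtain ⟨C, hC, hCval⟩ := exists_contraction_traceNorm (tensorId ⇑(Ψ - Φ) O)
  rw [← hCval]
  have hnI : ‖-Complex.I‖ = 1 := by simp
  have hI : ‖Complex.I‖ = 1 := by simp
  have key : (C * tensorId ⇑(Ψ - Φ) O).trace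
      = ((2⁻¹:ℝ):ℂ) * ( (C * tensorId ⇑Λa P₁).trace + ((-C) * tensorId ⇑Λa Q₁).trace
        + ((Complex.I • C) * tensorId ⇑Λa P₂).trace
        + (((-Complex.I) • C) * tensorId ⇑Λa Q₂).trace
        + ((-C) * tensorId ⇑Λb P₁).trace + (C * tensorId ⇑Λb Q₁).trace
        + (((-Complex.I) • C) * tensorId ⇑Λb P₂).trace
        + ((Complex.I • C) * tensorId ⇑Λb Q₂).trace ) := by
    rw [hexp]
    simp only [Matrix.mul_smul, Matrix.mul_sub, Matrix.mul_add, Matrix.trace_smul,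
      Matrix.trace_sub, Matrix.trace_add, Matrix.smul_mul, Matrix.neg_mul, Matrix.trace_neg,
      smul_eq_mul, ← h2inv]
    ring
  have c1 := re_trace_mul_psd_le hC (h₁ P₁ hP₁)
  have c2 := re_trace_mul_psd_le hC.neg (h₁ Q₁ hQ₁)
  have c3 := re_trace_mul_psd_le (hC.unit_smul hI) (h₁ P₂ hP₂)
  have c4 := re_trace_mul_psd_le (hC.unit_smul hnI) (h₁ Q₂ hQ₂)
  have c5 := re_trace_mul_psd_le hC.neg (h₂ P₁ hP₁)
  have c6 := re_trace_mul_psd_le hC (h₂ Q₁ hQ₁)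
  have c7 := re_trace_mul_psd_le (hC.unit_smul hnI) (h₂ P₂ hP₂)
  have c8 := re_trace_mul_psd_le (hC.unit_smul hI) (h₂ Q₂ hQ₂)
  have p1 := hpair P₁
  have p2 := hpair Q₁
  have p3 := hpair P₂
  have p4 := hpair Q₂
  have h2ε : (0:ℝ) ≤ 2 * ε := by linarith
  have m1 : 2 * ε * (P₁.trace.re + Q₁.trace.re) ≤ 2 * ε :=
    (mul_le_mul_of_nonneg_left (hs₁ ▸ hnormH) h2ε).trans_eq (mul_one _)
  have m2 : 2 * ε * (P₂.trace.re + Q₂.trace.re) ≤ 2 * ε :=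
    (mul_le_mul_of_nonneg_left (hs₂ ▸ hnormK) h2ε).trans_eq (mul_one _)
  rw [key, Complex.re_ofReal_mul]
  simp only [Complex.add_re]
  linarith
end
end

section
/- Let k ≥ 1 and let T₁, T₂ be 𝔽₂-linear subspaces of 𝔽₂^{2k}. Then Tr(r(T₁)ᵀ · r(T₂)) = 2^{dim(T₁ ∩ T₂)}. Moreover, if dim T₁ = dim T₂ = k and T₁ ≠ T₂, then Tr(r(T₁)ᵀ · r(T₂)) ≤ 2^{k−1}. (This is the paper's overlap formula ⟨T₁|T₂⟩ = 2^{k−|T₁,T₂|} for Clifford-commutant operators, together with the distance bound |T₁,T₂| ≥ 1 for distinct stochastic Lagrangian subspaces.) -/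
set_option maxHeartbeats 1000000


open MeasureTheory Matrix
open scoped ComplexOrder Classical BigOperators

noncomputable section

/-- The matrix `r(T)` attached to an `𝔽₂`-linear subspace `T ⊆ 𝔽₂^{2k}`: the `(x, y)`
entry is `1` if `(x, y) ∈ T` and `0` otherwise. -/
def rSub (k : ℕ)
    (T : Submodule (ZMod 2) ((Fin k → ZMod 2) × (Fin k → ZMod 2))) :
    Matrix (Fin k → ZMod 2) (Fin k → ZMod 2) ℂ :=
  Matrix.of fun x y => if (x, y) ∈ T then 1 else 0

/-- Overlap formula `Tr(r(T₁)ᵀ r(T₂)) = 2^{dim(T₁ ∩ T₂)}`; moreover if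
`dim T₁ = dim T₂ = k` and `T₁ ≠ T₂` then `Tr(r(T₁)ᵀ r(T₂)) ≤ 2^{k-1}`. -/
theorem overlap_formula (k : ℕ) (hk : 1 ≤ k)
    (T₁ T₂ : Submodule (ZMod 2) ((Fin k → ZMod 2) × (Fin k → ZMod 2))) :
    ((rSub k T₁)ᵀ * rSub k T₂).trace =
      (2 : ℂ) ^ (Module.finrank (ZMod 2) ↥(T₁ ⊓ T₂)) ∧
    (Module.finrank (ZMod 2) ↥T₁ = k → Module.finrank (ZMod 2) ↥T₂ = k → T₁ ≠ T₂ →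
      (((rSub k T₁)ᵀ * rSub k T₂).trace).re ≤ 2 ^ (k - 1)) := by
  have key : ((rSub k T₁)ᵀ * rSub k T₂).trace =
      (2 : ℂ) ^ (Module.finrank (ZMod 2) ↥(T₁ ⊓ T₂)) := by
    have h1 : ((rSub k T₁)ᵀ * rSub k T₂).trace =
        ∑ x : Fin k → ZMod 2, ∑ y : Fin k → ZMod 2,
          (if (y, x) ∈ T₁ ⊓ T₂ then (1 : ℂ) else 0) := by
      rw [Matrix.trace]
      simp only [Matrix.diag, Matrix.mul_apply, Matrix.transpose_apply, rSub,
        Matrix.of_apply, ite_mul, one_mul, zero_mul, Submodule.mem_inf]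
      congr 1; ext x; congr 1; ext y
      by_cases h1 : (y, x) ∈ T₁ <;> by_cases h2 : (y, x) ∈ T₂ <;> simp [h1, h2]
    rw [h1, Finset.sum_comm]
    have h4 : (∑ y : Fin k → ZMod 2, ∑ x : Fin k → ZMod 2,
        if (y, x) ∈ T₁ ⊓ T₂ then (1:ℂ) else 0)
        = ∑ p : (Fin k → ZMod 2) × (Fin k → ZMod 2),
          if p ∈ T₁ ⊓ T₂ then (1:ℂ) else 0 :=
      (Fintype.sum_prod_type (f := fun p : (Fin k → ZMod 2) × (Fin k → ZMod 2) => if p ∈ T₁ ⊓ T₂ then (1:ℂ) else 0)).symm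
    rw [h4, Finset.sum_boole]
    have h5 : (Finset.univ.filter (fun p : (Fin k → ZMod 2) × (Fin k → ZMod 2) =>
        p ∈ T₁ ⊓ T₂)).card = Nat.card ↥(T₁ ⊓ T₂) := by
      simp [Nat.card_eq_fintype_card, Fintype.card_subtype]
    have h6 : Nat.card ↥(T₁ ⊓ T₂) = 2 ^ Module.finrank (ZMod 2) ↥(T₁ ⊓ T₂) := by
      rw [Nat.card_eq_fintype_card, Module.card_eq_pow_finrank (K := ZMod 2), ZMod.card]
    rw [h5, h6]
    push_cast; ring
  refine ⟨key, fun hd1 hd2 hne => ?_⟩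
  have hlt : Module.finrank (ZMod 2) ↥(T₁ ⊓ T₂) < k := by
    by_contra h
    push_neg at h
    have e1 : T₁ ⊓ T₂ = T₁ := Submodule.eq_of_le_of_finrank_le inf_le_left (hd1.le.trans h)
    have e2 : T₁ ⊓ T₂ = T₂ := Submodule.eq_of_le_of_finrank_le inf_le_right (hd2.le.trans h)
    exact hne (e1 ▸ e2)
  rw [key]
  have : ((2 : ℂ) ^ (Module.finrank (ZMod 2) ↥(T₁ ⊓ T₂))).re
      = 2 ^ (Module.finrank (ZMod 2) ↥(T₁ ⊓ T₂)) := by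
    rw [show (2:ℂ) = ((2:ℝ):ℂ) by norm_num, ← Complex.ofReal_pow, Complex.ofReal_re]
  rw [this]
  have := Nat.le_pred_of_lt hlt
  calc (2:ℝ) ^ Module.finrank (ZMod 2) ↥(T₁ ⊓ T₂) ≤ 2 ^ (k-1) :=
    pow_le_pow_right₀ (by norm_num) this
end
end

section
/- Let d, k ≥ 1, let μ be a Borel probability measure on the unit sphere of ℂ^d, let ρ := ∫ (|ψ⟩⟨ψ|)^{⊗k} dμ(ψ) be the k-th moment of the ensemble and F := ∫∫ |⟨ψ,φ⟩|^{2k} dμ(ψ)dμ(φ) its frame potential. Then Tr[(ρ − ρ_H^{(k)})²] = F − 1/Tr P_sym; in particular F ≥ 1/C(d+k−1,k), with the Haar ensemble's frame potential 1/C(d+k−1,k) as the minimum. -/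
open MeasureTheory Matrix
open scoped ComplexOrder Classical BigOperators

noncomputable section

/-- The matrix `R(π)` permuting the `k` tensor factors of `(ℂ^β)^{⊗k}`. -/
def permMat (k : ℕ) (β : Type*) (π : Equiv.Perm (Fin k)) :
    Matrix (Fin k → β) (Fin k → β) ℂ :=
  Matrix.of fun X Y => if ∀ a, X a = Y (π a) then (1 : ℂ) else 0

/-- `P_sym = (1/k!) ∑_{π ∈ S_k} R(π)`, the orthogonal projection onto the symmetric
subspace of the `k`-fold tensor power. -/
def Psym (k : ℕ) (β : Type*) [Fintype β] : Matrix (Fin k → β) (Fin k → β) ℂ :=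
  ((Nat.factorial k : ℂ))⁻¹ • ∑ π : Equiv.Perm (Fin k), permMat k β π

/-- `ρ_H^{(k)} = P_sym / Tr P_sym`, the `k`-th moment of a Haar-random unit vector in
`ℂ^d` with `d = card β`; here `Tr P_sym = C(d + k - 1, k)`. -/
def rhoHaar (k : ℕ) (β : Type*) [Fintype β] : Matrix (Fin k → β) (Fin k → β) ℂ :=
  ((Nat.choose (Fintype.card β + k - 1) k : ℂ))⁻¹ • Psym k β

instance euclideanMeasurableSpace (d : ℕ) : MeasurableSpace (EuclideanSpace ℂ (Fin d)) :=
  borel _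

/-! ### Auxiliary lemmas -/

attribute [local instance] arrowAction

section Combinatorics

lemma exists_perm_of_ofFn_perm {α : Type*} [LinearOrder α] {k : ℕ} {X Y : Fin k → α}
    (h : (List.ofFn X).Perm (List.ofFn Y)) : ∃ σ : Equiv.Perm (Fin k), X = Y ∘ σ := by
  have hX := Tuple.monotone_sort X
  have hY := Tuple.monotone_sort Y
  have hperm : (List.ofFn (X ∘ Tuple.sort X)).Perm (List.ofFn (Y ∘ Tuple.sort Y)) :=
    ((Equiv.Perm.ofFn_comp_perm _ X).trans h).trans (Equiv.Perm.ofFn_comp_perm _ Y).symm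
  have heq : X ∘ Tuple.sort X = Y ∘ Tuple.sort Y :=
    List.ofFn_injective (List.Perm.eq_of_sortedLE hX.sortedLE_ofFn hY.sortedLE_ofFn hperm)
  refine ⟨(Tuple.sort X).symm.trans (Tuple.sort Y), ?_⟩
  funext a
  have := congrFun heq ((Tuple.sort X).symm a)
  simpa using this

/-- map a tuple to its multiset of values -/
def toSym (k d : ℕ) (X : Fin k → Fin d) : Sym (Fin d) k :=
  ⟨(List.ofFn X : Multiset (Fin d)), by simp⟩

lemma toSym_eq_iff {k d : ℕ} {X Y : Fin k → Fin d} :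
    toSym k d X = toSym k d Y ↔ ∃ σ : Equiv.Perm (Fin k), X = Y ∘ σ := by
  constructor
  · intro h
    exact exists_perm_of_ofFn_perm (Multiset.coe_eq_coe.mp (congrArg Subtype.val h))
  · rintro ⟨σ, rfl⟩
    apply Subtype.ext
    exact Multiset.coe_eq_coe.mpr (Equiv.Perm.ofFn_comp_perm σ Y)

/-- the orbit space of `S_k` acting on `Fin k → Fin d` is `Sym (Fin d) k`. -/
def orbitEquivSym (k d : ℕ) :
    Quotient (MulAction.orbitRel (Equiv.Perm (Fin k)) (Fin k → Fin d)) ≃ Sym (Fin d) k := by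
  refine Equiv.ofBijective (Quotient.lift (toSym k d) ?_) ⟨?_, ?_⟩
  · rintro X Y ⟨σ, rfl⟩
    refine toSym_eq_iff.mpr ⟨σ⁻¹, ?_⟩
    funext a
    simp [arrowAction]
    rfl
  · rintro ⟨X⟩ ⟨Y⟩ h
    obtain ⟨σ, rfl⟩ := toSym_eq_iff.mp h
    exact Quotient.sound ⟨σ⁻¹, by funext a; simp [arrowAction]; rfl⟩
  · rintro ⟨s, hs⟩
    obtain ⟨l, rfl⟩ := Quotient.exists_rep s
    have hl : l.length = k := by simpa using hs
    refine ⟨Quotient.mk _ (fun i : Fin k => l.get (Fin.cast hl.symm i)), ?_⟩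
    have : toSym k d (fun i : Fin k => l.get (Fin.cast hl.symm i))
        = ⟨(l : Multiset (Fin d)), hs⟩ := by
      apply Subtype.ext
      show ((List.ofFn _ : List (Fin d)) : Multiset (Fin d)) = (l : Multiset (Fin d))
      congr 1
      apply List.ext_get (by simp [hl])
      intro n h1 h2
      simp
    exact this

lemma trace_permMat (k d : ℕ) (π : Equiv.Perm (Fin k)) :
    (permMat k (Fin d) π).trace
      = (Fintype.card (MulAction.fixedBy (Fin k → Fin d) π) : ℂ) := by
  have hfix : ∀ X : Fin k → Fin d, (π • X = X) ↔ (∀ a, X a = X (π a)) := by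
    intro X
    constructor
    · intro h a
      have h2 : X (π⁻¹ (π a)) = X (π a) := congrFun h (π a)
      simpa using h2
    · intro h
      funext a
      show X (π⁻¹ a) = X a
      conv_rhs => rw [← Equiv.apply_symm_apply π a]
      exact h (π⁻¹ a)
  have hset : MulAction.fixedBy (Fin k → Fin d) π = {X | ∀ a, X a = X (π a)} :=
    Set.ext fun X => hfix X
  have hswap : (permMat k (Fin d) π).trace
      = ∑ x : Fin k → Fin d, if (∀ a, x a = x (π a)) then (1:ℂ) else 0 := by
    rw [Matrix.trace]
    refine Finset.sum_congr rfl fun x _ => ?_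
    simp only [Matrix.diag, permMat, Matrix.of_apply]
    split_ifs <;> rfl
  rw [hswap, Finset.sum_boole]
  norm_cast
  exact (Fintype.card_of_finset' _ (fun X => by
    simp only [Finset.mem_filter, Finset.mem_univ, true_and, MulAction.mem_fixedBy]
    exact (hfix X).symm)).symm

lemma trace_Psym (k d : ℕ) :
    (Psym k (Fin d)).trace = (Nat.choose (d + k - 1) k : ℂ) := by
  have hcard : Fintype.card (Quotient (MulAction.orbitRel (Equiv.Perm (Fin k)) (Fin k → Fin d)))
      = Nat.choose (d + k - 1) k := by
    rw [Fintype.card_congr (orbitEquivSym k d), Sym.card_sym_eq_choose, Fintype.card_fin]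
  have hb := MulAction.sum_card_fixedBy_eq_card_orbits_mul_card_group
    (Equiv.Perm (Fin k)) (Fin k → Fin d)
  rw [Psym, Matrix.trace_smul, Matrix.trace_sum]
  have : (∑ π : Equiv.Perm (Fin k), (permMat k (Fin d) π).trace)
      = ((∑ π : Equiv.Perm (Fin k),
          Fintype.card (MulAction.fixedBy (Fin k → Fin d) π) : ℕ) : ℂ) := by
    push_cast
    exact Finset.sum_congr rfl fun π _ => trace_permMat k d π
  rw [this, hb, hcard, Fintype.card_perm, Fintype.card_fin]
  have hfac : ((Nat.factorial k : ℂ)) ≠ 0 := Nat.cast_ne_zero.mpr (Nat.factorial_ne_zero k)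
  push_cast
  rw [smul_eq_mul]
  field_simp

end Combinatorics

section MatrixAlgebra

/-- multiplication by a permutation matrix on a row-symmetric matrix -/
lemma permMat_mul {k : ℕ} {β : Type*} [Fintype β] (π : Equiv.Perm (Fin k))
    (M : Matrix (Fin k → β) (Fin k → β) ℂ)
    (hM : ∀ (τ : Equiv.Perm (Fin k)) (X Y : Fin k → β), M (X ∘ τ) Y = M X Y) :
    permMat k β π * M = M := by
  ext X Y
  rw [Matrix.mul_apply, Finset.sum_eq_single (X ∘ ⇑π⁻¹)]
  · have h1 : (∀ a, X a = (X ∘ ⇑π⁻¹) (π a)) := by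
      intro a; simp
    simp only [permMat, Matrix.of_apply, if_pos h1, one_mul]
    exact hM π⁻¹ X Y
  · intro Z _ hZ
    have : ¬ (∀ a, X a = Z (π a)) := by
      intro h
      apply hZ
      funext b
      have := h (π⁻¹ b)
      simp at this
      exact this.symm
    simp only [permMat, Matrix.of_apply, if_neg this, zero_mul]
  · intro h
    exact absurd (Finset.mem_univ _) h

lemma Psym_mul {k : ℕ} {β : Type*} [Fintype β] (M : Matrix (Fin k → β) (Fin k → β) ℂ)
    (hM : ∀ (τ : Equiv.Perm (Fin k)) (X Y : Fin k → β), M (X ∘ τ) Y = M X Y) :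
    Psym k β * M = M := by
  rw [Psym, Matrix.smul_mul, Finset.sum_mul]
  have : ∀ π ∈ Finset.univ, permMat k β π * M = M := fun π _ => permMat_mul π M hM
  rw [Finset.sum_congr rfl this, Finset.sum_const, Finset.card_univ, Fintype.card_perm,
    Fintype.card_fin, ← Nat.cast_smul_eq_nsmul ℂ, smul_smul]
  rw [inv_mul_cancel₀ (Nat.cast_ne_zero.mpr (Nat.factorial_ne_zero k)), one_smul]

lemma Psym_rowSymm {k : ℕ} {β : Type*} [Fintype β] (τ : Equiv.Perm (Fin k))
    (X Y : Fin k → β) : Psym k β (X ∘ τ) Y = Psym k β X Y := by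
  simp only [Psym, Matrix.smul_apply, Matrix.sum_apply]
  congr 1
  apply Finset.sum_bijective (fun π => π * τ⁻¹) (Group.mulRight_bijective τ⁻¹) (by simp)
  intro π _
  simp only [permMat, Matrix.of_apply]
  refine if_congr ⟨fun h a => ?_, fun h a => ?_⟩ rfl rfl
  · have := h (τ⁻¹ a); simpa using this
  · have := h (τ a); simpa using this

lemma Psym_mul_Psym (k : ℕ) (β : Type*) [Fintype β] : Psym k β * Psym k β = Psym k β :=
  Psym_mul _ (fun τ X Y => Psym_rowSymm τ X Y)

lemma Psym_conjTranspose (k : ℕ) (β : Type*) [Fintype β] :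
    (Psym k β)ᴴ = Psym k β := by
  rw [Psym, Matrix.conjTranspose_smul, Matrix.conjTranspose_sum]
  congr 1
  · simp
  · apply Finset.sum_bijective (fun π => π⁻¹) (by exact (Equiv.inv _).bijective) (by simp)
    intro π _
    ext X Y
    simp only [permMat, Matrix.conjTranspose_apply, Matrix.of_apply]
    rw [apply_ite (star : ℂ → ℂ)]
    simp only [star_one, star_zero]
    refine if_congr ⟨fun h a => ?_, fun h a => ?_⟩ rfl rfl
    · have := h (π⁻¹ a); simp at this; exact this.symm
    · have := h (π a); simp at this; exact this.symm

end MatrixAlgebra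

section Analysis

instance (d : ℕ) : BorelSpace (EuclideanSpace ℂ (Fin d)) := ⟨rfl⟩

abbrev Sph (d : ℕ) := ↥(Metric.sphere (0 : EuclideanSpace ℂ (Fin d)) 1)

lemma cont_coord (d : ℕ) (i : Fin d) :
    Continuous fun ψ : Sph d => (ψ : EuclideanSpace ℂ (Fin d)) i :=
  (EuclideanSpace.proj (𝕜 := ℂ) i).continuous.comp continuous_subtype_val

lemma coord_le_one {d : ℕ} (ψ : Sph d) (i : Fin d) :
    ‖(ψ : EuclideanSpace ℂ (Fin d)) i‖ ≤ 1 := by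
  have hψ : ‖(ψ : EuclideanSpace ℂ (Fin d))‖ = 1 := mem_sphere_zero_iff_norm.mp ψ.2
  have h := EuclideanSpace.norm_eq (ψ : EuclideanSpace ℂ (Fin d))
  rw [hψ] at h
  have hsum : (∑ j, ‖(ψ : EuclideanSpace ℂ (Fin d)) j‖ ^ 2) = 1 := by
    have := congrArg (· ^ 2) h.symm
    simpa [Real.sq_sqrt (Finset.sum_nonneg fun j _ => sq_nonneg _)] using this
  nlinarith [Finset.single_le_sum (f := fun j => ‖(ψ : EuclideanSpace ℂ (Fin d)) j‖ ^ 2)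
      (fun j _ => sq_nonneg _) (Finset.mem_univ i), norm_nonneg ((ψ : EuclideanSpace ℂ (Fin d)) i)]

/-- the basic integrand -/
def ff (d k : ℕ) (X Y : Fin k → Fin d) (ψ : Sph d) : ℂ :=
  (∏ a, (ψ : EuclideanSpace ℂ (Fin d)) (X a)) *
    (∏ a, (starRingEnd ℂ) ((ψ : EuclideanSpace ℂ (Fin d)) (Y a)))

lemma ff_cont (d k : ℕ) (X Y : Fin k → Fin d) : Continuous (ff d k X Y) := by
  apply Continuous.mul
  · exact continuous_finset_prod _ fun a _ => cont_coord d (X a)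
  · exact continuous_finset_prod _ fun a _ =>
      (Complex.continuous_conj).comp (cont_coord d (Y a))

lemma ff_norm_le_one (d k : ℕ) (X Y : Fin k → Fin d) (ψ : Sph d) :
    ‖ff d k X Y ψ‖ ≤ 1 := by
  rw [ff, norm_mul]
  have h1 : ‖∏ a, (ψ : EuclideanSpace ℂ (Fin d)) (X a)‖ ≤ 1 := by
    rw [norm_prod]
    exact Finset.prod_le_one (fun a _ => norm_nonneg _) (fun a _ => coord_le_one ψ (X a))
  have h2 : ‖∏ a, (starRingEnd ℂ) ((ψ : EuclideanSpace ℂ (Fin d)) (Y a))‖ ≤ 1 := by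
    rw [norm_prod]
    refine Finset.prod_le_one (fun a _ => norm_nonneg _) (fun a _ => ?_)
    rw [RCLike.norm_conj]
    exact coord_le_one ψ (Y a)
  calc ‖∏ a, (ψ : EuclideanSpace ℂ (Fin d)) (X a)‖ *
      ‖∏ a, (starRingEnd ℂ) ((ψ : EuclideanSpace ℂ (Fin d)) (Y a))‖
      ≤ 1 * 1 := mul_le_mul h1 h2 (norm_nonneg _) zero_le_one
    _ = 1 := one_mul 1

lemma ff_integrable (d k : ℕ) (X Y : Fin k → Fin d) (μ : Measure (Sph d))
    [IsProbabilityMeasure μ] : Integrable (ff d k X Y) μ := by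
  refine Integrable.mono' (integrable_const 1) ((ff_cont d k X Y).aestronglyMeasurable) ?_
  exact Filter.Eventually.of_forall (ff_norm_le_one d k X Y)

lemma sum_sq_coord {d : ℕ} (ψ : Sph d) :
    (∑ j, ‖(ψ : EuclideanSpace ℂ (Fin d)) j‖ ^ 2) = 1 := by
  have hψ : ‖(ψ : EuclideanSpace ℂ (Fin d))‖ = 1 := mem_sphere_zero_iff_norm.mp ψ.2
  have h := EuclideanSpace.norm_eq (ψ : EuclideanSpace ℂ (Fin d))
  rw [hψ] at h
  have := congrArg (· ^ 2) h.symm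
  simpa [Real.sq_sqrt (Finset.sum_nonneg fun j _ => sq_nonneg _)] using this

lemma sum_mul_conj {d : ℕ} (ψ : Sph d) :
    (∑ i, (ψ : EuclideanSpace ℂ (Fin d)) i
      * (starRingEnd ℂ) ((ψ : EuclideanSpace ℂ (Fin d)) i)) = 1 := by
  have : ∀ i, (ψ : EuclideanSpace ℂ (Fin d)) i
      * (starRingEnd ℂ) ((ψ : EuclideanSpace ℂ (Fin d)) i)
      = ((‖(ψ : EuclideanSpace ℂ (Fin d)) i‖ ^ 2 : ℝ) : ℂ) := by
    intro i
    rw [Complex.mul_conj, Complex.normSq_eq_norm_sq]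
  rw [Finset.sum_congr rfl fun i _ => this i, ← Complex.ofReal_sum, sum_sq_coord]
  norm_num

/-- expansion of a `k`-th power of a sum over `Fin d` as a sum over tuples -/
lemma pow_expand {d k : ℕ} (g : Fin d → ℂ) :
    (∑ i, g i) ^ k = ∑ X : Fin k → Fin d, ∏ a, g (X a) := by
  rw [Finset.sum_pow']
  try rw [Fintype.piFinset_univ]

def rhoM (d k : ℕ) (μ : Measure (Sph d)) : Matrix (Fin k → Fin d) (Fin k → Fin d) ℂ :=
  Matrix.of fun X Y => ∫ ψ, ff d k X Y ψ ∂μ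

lemma rhoM_rowSymm (d k : ℕ) (μ : Measure (Sph d)) (τ : Equiv.Perm (Fin k))
    (X Y : Fin k → Fin d) : rhoM d k μ (X ∘ τ) Y = rhoM d k μ X Y := by
  simp only [rhoM, Matrix.of_apply]
  congr 1
  funext ψ
  rw [ff, ff]
  congr 1
  exact Equiv.prod_comp τ (fun i => (ψ : EuclideanSpace ℂ (Fin d)) (X i))

lemma rhoM_herm (d k : ℕ) (μ : Measure (Sph d)) : (rhoM d k μ)ᴴ = rhoM d k μ := by
  ext X Y
  simp only [Matrix.conjTranspose_apply, rhoM, Matrix.of_apply]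
  rw [RCLike.star_def, ← integral_conj]
  congr 1
  funext ψ
  rw [ff, ff, _root_.map_mul, _root_.map_prod, _root_.map_prod]
  simp only [Complex.conj_conj]
  ring

lemma trace_rhoM (d k : ℕ) (μ : Measure (Sph d)) [IsProbabilityMeasure μ] :
    (rhoM d k μ).trace = 1 := by
  rw [Matrix.trace]
  simp only [Matrix.diag, rhoM, Matrix.of_apply]
  rw [← integral_finset_sum _ (fun X _ => ff_integrable d k X X μ)]
  have hpt : ∀ ψ : Sph d, (∑ X : Fin k → Fin d, ff d k X X ψ) = 1 := by
    intro ψ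
    have : ∀ X : Fin k → Fin d, ff d k X X ψ
        = ∏ a, ((ψ : EuclideanSpace ℂ (Fin d)) (X a)
          * (starRingEnd ℂ) ((ψ : EuclideanSpace ℂ (Fin d)) (X a))) := by
      intro X
      rw [ff, Finset.prod_mul_distrib]
    rw [Finset.sum_congr rfl fun X _ => this X,
      ← pow_expand (fun i => (ψ : EuclideanSpace ℂ (Fin d)) i
        * (starRingEnd ℂ) ((ψ : EuclideanSpace ℂ (Fin d)) i)), sum_mul_conj, one_pow]
  rw [integral_congr_ae (Filter.Eventually.of_forall hpt)]
  simp

lemma my_integral_ofReal {α : Type*} [MeasurableSpace α] {μ : Measure α} (f : α → ℝ) :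
    ((∫ x, f x ∂μ : ℝ) : ℂ) = ∫ x, (f x : ℂ) ∂μ := (integral_ofReal).symm

lemma abs_inner_pow {d k : ℕ} (ψ φ : Sph d) :
    ((‖((inner ℂ (ψ : EuclideanSpace ℂ (Fin d)) (φ : EuclideanSpace ℂ (Fin d)) : ℂ))‖
        ^ (2 * k) : ℝ) : ℂ)
      = ∑ X : Fin k → Fin d, ∑ Y : Fin k → Fin d, ff d k Y X ψ * ff d k X Y φ := by
  set z : ℂ := (inner ℂ (ψ : EuclideanSpace ℂ (Fin d)) (φ : EuclideanSpace ℂ (Fin d)) : ℂ)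
    with hzdef
  have hz : ((‖z‖ ^ (2 * k) : ℝ) : ℂ) = z ^ k * ((starRingEnd ℂ) z) ^ k := by
    have h2 : ((‖z‖ : ℂ)) ^ 2 = z * (starRingEnd ℂ) z := by
      rw [Complex.mul_conj]
      norm_cast
      exact Complex.sq_norm z
    push_cast
    rw [pow_mul, h2, mul_pow]
  have hz1 : z = ∑ i, (starRingEnd ℂ) ((ψ : EuclideanSpace ℂ (Fin d)) i)
      * (φ : EuclideanSpace ℂ (Fin d)) i := by
    rw [hzdef]
    simp only [PiLp.inner_apply, RCLike.inner_apply']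
  have hz2 : (starRingEnd ℂ) z = ∑ i, (ψ : EuclideanSpace ℂ (Fin d)) i
      * (starRingEnd ℂ) ((φ : EuclideanSpace ℂ (Fin d)) i) := by
    rw [hz1, map_sum]
    refine Finset.sum_congr rfl fun i _ => ?_
    rw [_root_.map_mul, Complex.conj_conj]
  rw [hz, hz2, hz1, pow_expand, pow_expand, Finset.sum_mul_sum]
  refine Finset.sum_congr rfl fun X _ => Finset.sum_congr rfl fun Y _ => ?_
  rw [ff, ff, Finset.prod_mul_distrib, Finset.prod_mul_distrib]
  ring

lemma F_eq (d k : ℕ) (μ : Measure (Sph d)) [IsProbabilityMeasure μ] :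
    ((∫ ψ, (∫ φ, ‖
        ((inner ℂ (ψ : EuclideanSpace ℂ (Fin d)) (φ : EuclideanSpace ℂ (Fin d)) : ℂ))‖
          ^ (2 * k) ∂μ) ∂μ : ℝ) : ℂ)
      = (rhoM d k μ * rhoM d k μ).trace := by
  have step1 : ∀ ψ : Sph d,
      ((∫ φ, ‖
        ((inner ℂ (ψ : EuclideanSpace ℂ (Fin d)) (φ : EuclideanSpace ℂ (Fin d)) : ℂ))‖
          ^ (2 * k) ∂μ : ℝ) : ℂ)
      = ∑ X : Fin k → Fin d, ∑ Y : Fin k → Fin d, ff d k Y X ψ * rhoM d k μ X Y := by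
    intro ψ
    rw [my_integral_ofReal]
    have h1 : ∀ X : Fin k → Fin d, Integrable
        (fun φ : Sph d => ∑ Y : Fin k → Fin d, ff d k Y X ψ * ff d k X Y φ) μ :=
      fun X => integrable_finset_sum _ (fun Y _ => (ff_integrable d k X Y μ).const_mul _)
    rw [integral_congr_ae (Filter.Eventually.of_forall (fun φ => abs_inner_pow ψ φ)),
      integral_finset_sum _ (fun X _ => h1 X)]
    refine Finset.sum_congr rfl fun X _ => ?_
    rw [integral_finset_sum _ (fun Y _ => (ff_integrable d k X Y μ).const_mul _)]
    refine Finset.sum_congr rfl fun Y _ => ?_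
    rw [MeasureTheory.integral_const_mul]
    rfl
  rw [my_integral_ofReal, integral_congr_ae (Filter.Eventually.of_forall step1),
    integral_finset_sum (f := fun X a => ∑ Y : Fin k → Fin d, ff d k Y X a * rhoM d k μ X Y)
      _ (fun X _ => integrable_finset_sum _
      (fun Y _ => (ff_integrable d k Y X μ).mul_const _))]
  rw [Matrix.trace]
  simp only [Matrix.diag, Matrix.mul_apply]
  refine Finset.sum_congr rfl fun X _ => ?_
  rw [integral_finset_sum (f := fun Y a => ff d k Y X a * rhoM d k μ X Y)
    _ (fun Y _ => (ff_integrable d k Y X μ).mul_const _)]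
  refine Finset.sum_congr rfl fun Y _ => ?_
  rw [MeasureTheory.integral_mul_const]
  rw [mul_comm]
  rfl

end Analysis

/-- For any Borel probability measure `μ` on the unit sphere of `ℂ^d`, with `ρ` the
`k`-th moment of the ensemble and `F` its frame potential, we have
`Tr[(ρ - ρ_H^{(k)})²] = F - 1/Tr P_sym`; in particular `F ≥ 1/C(d+k-1, k)`, the Haar
frame potential, which is the minimum. -/
theorem frame_potential_identity
    (d k : ℕ) (hd : 1 ≤ d) (hk : 1 ≤ k)
    (μ : Measure ↥(Metric.sphere (0 : EuclideanSpace ℂ (Fin d)) 1))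
    [IsProbabilityMeasure μ]
    (ρ : Matrix (Fin k → Fin d) (Fin k → Fin d) ℂ)
    (hρ : ρ = Matrix.of fun X Y =>
      ∫ ψ, (∏ a, (ψ : EuclideanSpace ℂ (Fin d)) (X a)) *
        (∏ a, (starRingEnd ℂ) ((ψ : EuclideanSpace ℂ (Fin d)) (Y a))) ∂μ)
    (F : ℝ)
    (hF : F = ∫ ψ, (∫ φ, ‖
        ((inner ℂ (ψ : EuclideanSpace ℂ (Fin d)) (φ : EuclideanSpace ℂ (Fin d)) : ℂ))‖
          ^ (2 * k) ∂μ) ∂μ) :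
    ((ρ - rhoHaar k (Fin d)) * (ρ - rhoHaar k (Fin d))).trace =
        (F : ℂ) - ((Nat.choose (d + k - 1) k : ℂ))⁻¹ ∧
      (1 : ℝ) / (Nat.choose (d + k - 1) k) ≤ F := by
  have hρM : ρ = rhoM d k μ := hρ
  have hH : rhoHaar k (Fin d)
      = ((Nat.choose (d + k - 1) k : ℂ))⁻¹ • Psym k (Fin d) := by
    rw [rhoHaar, Fintype.card_fin]
  set D : ℂ := ((Nat.choose (d + k - 1) k : ℂ)) with hD
  have hDpos : 0 < Nat.choose (d + k - 1) k := Nat.choose_pos (by omega)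
  have hD0 : D ≠ 0 := Nat.cast_ne_zero.mpr hDpos.ne'
  -- trace computations
  have hPr : Psym k (Fin d) * rhoM d k μ = rhoM d k μ :=
    Psym_mul _ (fun τ X Y => rhoM_rowSymm d k μ τ X Y)
  have hHr : (rhoHaar k (Fin d) * rhoM d k μ).trace = D⁻¹ := by
    rw [hH, Matrix.smul_mul, Matrix.trace_smul, hPr, trace_rhoM, smul_eq_mul, mul_one]
  have hrH : (rhoM d k μ * rhoHaar k (Fin d)).trace = D⁻¹ := by
    rw [Matrix.trace_mul_comm, hHr]
  have hHH : (rhoHaar k (Fin d) * rhoHaar k (Fin d)).trace = D⁻¹ := by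
    rw [hH, Matrix.smul_mul, Matrix.mul_smul, Matrix.trace_smul, Matrix.trace_smul,
      Psym_mul_Psym, trace_Psym, smul_eq_mul, smul_eq_mul]
    field_simp
    exact hD.symm
  have hFtr : (rhoM d k μ * rhoM d k μ).trace = (F : ℂ) := by
    rw [hF]
    exact (F_eq d k μ).symm
  have key : ((ρ - rhoHaar k (Fin d)) * (ρ - rhoHaar k (Fin d))).trace
      = (F : ℂ) - D⁻¹ := by
    rw [hρM, Matrix.sub_mul, Matrix.mul_sub, Matrix.mul_sub, Matrix.trace_sub,
      Matrix.trace_sub, Matrix.trace_sub, hFtr, hrH, hHr, hHH]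
    ring
  refine ⟨key, ?_⟩
  -- positivity
  set A := rhoM d k μ - rhoHaar k (Fin d) with hA
  have hAherm : Aᴴ = A := by
    rw [hA, Matrix.conjTranspose_sub, rhoM_herm, hH, Matrix.conjTranspose_smul,
      Psym_conjTranspose]
    congr 1
    rw [hD, star_inv₀, star_natCast]
  have hAij : ∀ X Y, A Y X = (starRingEnd ℂ) (A X Y) := by
    intro X Y
    have := congrFun (congrFun hAherm Y) X
    rw [Matrix.conjTranspose_apply] at this
    exact this.symm
  have htrA : (A * A).trace
      = ((∑ X : Fin k → Fin d, ∑ Y : Fin k → Fin d, Complex.normSq (A X Y) : ℝ) : ℂ) := by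
    rw [Matrix.trace]
    simp only [Matrix.diag, Matrix.mul_apply]
    push_cast
    refine Finset.sum_congr rfl fun X _ => Finset.sum_congr rfl fun Y _ => ?_
    rw [hAij X Y, Complex.mul_conj]
  have hs : (0 : ℝ) ≤ ∑ X : Fin k → Fin d, ∑ Y : Fin k → Fin d, Complex.normSq (A X Y) :=
    Finset.sum_nonneg fun X _ => Finset.sum_nonneg fun Y _ => Complex.normSq_nonneg _
  have hkey2 : (F : ℂ) - D⁻¹
      = ((∑ X : Fin k → Fin d, ∑ Y : Fin k → Fin d, Complex.normSq (A X Y) : ℝ) : ℂ) := by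
    rw [← htrA, ← key, hρM]
  have hreal : F - ((Nat.choose (d + k - 1) k : ℝ))⁻¹
      = ∑ X : Fin k → Fin d, ∑ Y : Fin k → Fin d, Complex.normSq (A X Y) := by
    have : ((F - ((Nat.choose (d + k - 1) k : ℝ))⁻¹ : ℝ) : ℂ)
        = ((∑ X : Fin k → Fin d, ∑ Y : Fin k → Fin d, Complex.normSq (A X Y) : ℝ) : ℂ) := by
      rw [Complex.ofReal_sub, Complex.ofReal_inv, Complex.ofReal_natCast]
      exact hkey2
    exact_mod_cast this
  rw [one_div]
  have hDR : (0:ℝ) < (Nat.choose (d + k - 1) k : ℝ) := by exact_mod_cast hDpos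
  linarith [hreal, hs]
end
end

section
/- Let k be a positive multiple of 4, and on (ℂ²)^{⊗k} ≅ ℂ^{2^k} define Q := (1/4)·∑_{m,n ∈ {0,1}} (Z^m X^n)^{⊗k}, where Z = [[1,0],[0,−1]] and X = [[0,1],[1,0]] are the 2×2 Pauli matrices. Then Q is an orthogonal projection (Qᴴ = Q and Q² = Q) and Tr Q = 2^{k−2}. (This is the paper's statement that the single-qubit Pauli moment operator P^{(k)} = 4^{−1}∑_{m,n}(i^{mn}Z^mX^n)^{⊗k}, which for 4 | k equals Q, is the projection onto a CSS code space of dimension 2^{k−2}, the operator whose expectation value defines the stabilizer Rényi entropy.) -/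
open MeasureTheory Matrix
open scoped ComplexOrder Classical BigOperators

noncomputable section

/-- `k`-fold tensor (Kronecker) power of a matrix. -/
def tpow (k : ℕ) {β : Type*} (M : Matrix β β ℂ) :
    Matrix (Fin k → β) (Fin k → β) ℂ :=
  Matrix.of fun X Y => ∏ a, M (X a) (Y a)

/-- The Pauli matrix `Z`. -/
def Zmat : Matrix (Fin 2) (Fin 2) ℂ := !![1, 0; 0, -1]

/-- The Pauli matrix `X`. -/
def Xmat : Matrix (Fin 2) (Fin 2) ℂ := !![0, 1; 1, 0]

/-- The single-qubit Pauli moment operator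
`Q = (1/4) ∑_{m,n ∈ {0,1}} (Z^m X^n)^{⊗k}` on `(ℂ²)^{⊗k}`. -/
def Qproj (k : ℕ) : Matrix (Fin k → Fin 2) (Fin k → Fin 2) ℂ :=
  (4 : ℂ)⁻¹ • ∑ m : Fin 2, ∑ n : Fin 2, tpow k (Zmat ^ (m : ℕ) * Xmat ^ (n : ℕ))

lemma tpow_mul (k : ℕ) (M N : Matrix (Fin 2) (Fin 2) ℂ) :
    tpow k (M * N) = tpow k M * tpow k N := by
  ext X Y
  simp only [tpow, Matrix.of_apply, Matrix.mul_apply]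
  rw [Finset.prod_univ_sum, Fintype.piFinset_univ]
  exact Finset.sum_congr rfl fun f _ => Finset.prod_mul_distrib

lemma tpow_one (k : ℕ) : tpow k (1 : Matrix (Fin 2) (Fin 2) ℂ) = 1 := by
  ext X Y
  simp only [tpow, Matrix.of_apply, Matrix.one_apply]
  by_cases h : X = Y
  · simp [h]
  · obtain ⟨a, ha⟩ := Function.ne_iff.mp h
    rw [if_neg h]
    exact Finset.prod_eq_zero (Finset.mem_univ a) (if_neg ha)

lemma tpow_neg (k : ℕ) (he : Even k) (M : Matrix (Fin 2) (Fin 2) ℂ) :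
    tpow k (-M) = tpow k M := by
  ext X Y
  simp only [tpow, Matrix.of_apply, Matrix.neg_apply]
  have : ∀ a : Fin k, -M (X a) (Y a) = (-1) * M (X a) (Y a) := fun a => by ring
  simp_rw [this]
  rw [Finset.prod_mul_distrib, Finset.prod_const, Finset.card_univ, Fintype.card_fin,
    he.neg_one_pow, one_mul]

lemma tpow_conjTranspose (k : ℕ) (M : Matrix (Fin 2) (Fin 2) ℂ) :
    (tpow k M)ᴴ = tpow k Mᴴ := by
  ext X Y
  simp [tpow, Matrix.conjTranspose_apply, map_prod]

lemma tpow_trace (k : ℕ) (M : Matrix (Fin 2) (Fin 2) ℂ) :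
    (tpow k M).trace = M.trace ^ k := by
  have h : M.trace ^ k = ∏ _a : Fin k, ∑ j, M j j := by
    simp [Matrix.trace, Matrix.diag, Finset.prod_const, Finset.card_univ]
  rw [h, Finset.prod_univ_sum, Fintype.piFinset_univ]
  simp [Matrix.trace, Matrix.diag, tpow]

lemma ZZ : Zmat * Zmat = 1 := by
  ext i j; fin_cases i <;> fin_cases j <;>
    simp [Zmat, Matrix.mul_apply, Fin.sum_univ_two, Matrix.one_apply]

lemma XX : Xmat * Xmat = 1 := by
  ext i j; fin_cases i <;> fin_cases j <;>
    simp [Xmat, Matrix.mul_apply, Fin.sum_univ_two, Matrix.one_apply]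

lemma XZ : Xmat * Zmat = -(Zmat * Xmat) := by
  ext i j; fin_cases i <;> fin_cases j <;>
    simp [Xmat, Zmat, Matrix.mul_apply, Fin.sum_univ_two]

lemma Zh : Zmatᴴ = Zmat := by
  ext i j; fin_cases i <;> fin_cases j <;>
    simp [Zmat, Matrix.conjTranspose_apply]

lemma Xh : Xmatᴴ = Xmat := by
  ext i j; fin_cases i <;> fin_cases j <;>
    simp [Xmat, Matrix.conjTranspose_apply]

lemma ZXZ' : Zmat * (Xmat * Zmat) = -Xmat := by
  ext i j; fin_cases i <;> fin_cases j <;>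
    simp [Xmat, Zmat, Matrix.mul_apply, Fin.sum_univ_two]

lemma XZX' : Xmat * (Zmat * Xmat) = -Zmat := by
  ext i j; fin_cases i <;> fin_cases j <;>
    simp [Xmat, Zmat, Matrix.mul_apply, Fin.sum_univ_two]

lemma ZXZX' : Zmat * Xmat * (Zmat * Xmat) = -1 := by
  ext i j; fin_cases i <;> fin_cases j <;>
    simp [Xmat, Zmat, Matrix.mul_apply, Fin.sum_univ_two, Matrix.one_apply]

lemma Ztrace : Zmat.trace = 0 := by simp [Zmat, Matrix.trace_fin_two]

lemma Xtrace : Xmat.trace = 0 := by simp [Xmat, Matrix.trace_fin_two]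

lemma ZXtrace : (Zmat * Xmat).trace = 0 := by
  simp [Zmat, Xmat, Matrix.trace, Matrix.diag, Matrix.mul_apply, Fin.sum_univ_two]

lemma Qexp (k : ℕ) :
    Qproj k = (4 : ℂ)⁻¹ •
      (1 + tpow k Xmat + (tpow k Zmat + tpow k (Zmat * Xmat))) := by
  simp [Qproj, Fin.sum_univ_two, tpow_one]

/-- For `k` a positive multiple of `4`, `Q` is an orthogonal projection of trace
`2^{k-2}` (projection onto a CSS code space of dimension `2^{k-2}`). -/
theorem pauli_moment_projection (k : ℕ) (hk : 0 < k) (h4 : 4 ∣ k) :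
    (Qproj k)ᴴ = Qproj k ∧ Qproj k * Qproj k = Qproj k ∧
      (Qproj k).trace = 2 ^ (k - 2) := by
  have he : Even k := (even_iff_two_dvd).mpr (dvd_trans ⟨2, rfl⟩ h4)
  set tA := tpow k Zmat with hA
  set tB := tpow k Xmat with hB
  set tC := tpow k (Zmat * Xmat) with hC
  -- group relations
  have hAA : tA * tA = 1 := by rw [hA, ← tpow_mul, ZZ, tpow_one]
  have hBB : tB * tB = 1 := by rw [hB, ← tpow_mul, XX, tpow_one]
  have hAB : tA * tB = tC := by rw [hA, hB, hC, ← tpow_mul]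
  have hBA : tB * tA = tC := by
    rw [hB, hA, hC, ← tpow_mul, XZ, tpow_neg k he]
  have hAC : tA * tC = tB := by
    rw [hA, hC, hB, ← tpow_mul, ← Matrix.mul_assoc, ZZ, Matrix.one_mul]
  have hCA : tC * tA = tB := by
    rw [hC, hA, hB, ← tpow_mul, Matrix.mul_assoc, ZXZ', tpow_neg k he]
  have hBC : tB * tC = tA := by
    rw [hB, hC, hA, ← tpow_mul, XZX', tpow_neg k he]
  have hCB : tC * tB = tA := by
    rw [hC, hB, hA, ← tpow_mul, Matrix.mul_assoc, XX, Matrix.mul_one]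
  have hCC : tC * tC = 1 := by
    rw [hC, ← tpow_mul, ZXZX', tpow_neg k he, tpow_one]
  set S := 1 + tB + (tA + tC) with hS
  have hSS : S * S = (4 : ℂ) • S := by
    have h1 : (1 : Matrix (Fin k → Fin 2) (Fin k → Fin 2) ℂ) * S = S := Matrix.one_mul S
    have h2 : tB * S = S := by
      rw [hS]; simp only [Matrix.mul_add, Matrix.mul_one, hBB, hBA, hBC]; abel
    have h3 : tA * S = S := by
      rw [hS]; simp only [Matrix.mul_add, Matrix.mul_one, hAA, hAB, hAC]; abel
    have h4' : tC * S = S := by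
      rw [hS]; simp only [Matrix.mul_add, Matrix.mul_one, hCC, hCB, hCA]; abel
    calc S * S = 1 * S + tB * S + (tA * S + tC * S) := by
          rw [hS]; noncomm_ring
      _ = S + S + (S + S) := by rw [h1, h2, h3, h4']
      _ = (4 : ℂ) • S := by
          rw [show (4 : ℂ) = 1 + 1 + (1 + 1) by norm_num, add_smul, add_smul,
            one_smul]
  have hQ : Qproj k = (4 : ℂ)⁻¹ • S := by rw [Qexp, hS]
  refine ⟨?_, ?_, ?_⟩
  · rw [hQ, Matrix.conjTranspose_smul]
    congr 1
    · simp
    · rw [hS]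
      simp only [Matrix.conjTranspose_add, Matrix.conjTranspose_one]
      rw [hA, hB, hC, tpow_conjTranspose, tpow_conjTranspose, tpow_conjTranspose,
        Zh, Xh, Matrix.conjTranspose_mul, Zh, Xh, XZ, tpow_neg k he]
  · rw [hQ, Matrix.smul_mul, Matrix.mul_smul, smul_smul, hSS, smul_smul]
    norm_num
  · rw [hQ, Matrix.trace_smul, hS, Matrix.trace_add, Matrix.trace_add,
      Matrix.trace_add, Matrix.trace_one, hA, hB, hC, tpow_trace, tpow_trace,
      tpow_trace, Ztrace, Xtrace, ZXtrace, zero_pow hk.ne', Fintype.card_pi]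
    simp only [Fintype.card_fin, Finset.prod_const, Finset.card_univ]
    have hk4 : 4 ≤ k := Nat.le_of_dvd hk h4
    have : k = (k - 2) + 2 := by omega
    rw [this]
    push_cast
    rw [smul_eq_mul]
    ring
end
end
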